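/- Let P, P′ ∈ 𝔓 and f₁, f₂, g₁, g₂ ∈ U° with f_i, g_i ∉ P ∪ P′ for i = 1, 2. Suppose: (1) P′ separates f₁ and f₂ while P does not; (2) P′ separates g₁ and g₂ while P does not; (3) P separates each of f₁, f₂ from each of g₁, g₂. Then P ⩀ P′ ≠ ∅. -/

import Mathlib

noncomputable section

namespace PaperBound

variable {B : Type} {W : Type} [Group W]

/-- The value `B(α_i, α_j)` of the canonical symmetric bilinear form on simple roots:
`-cos (π / m i j)` if `m i j ≠ ∞` (encoded as `M i j ≠ 0`) and `-1` otherwise. -/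
def cB (M : CoxeterMatrix B) (i j : B) : ℝ :=
  if M i j = 0 then -1 else - Real.cos (Real.pi / (M i j : ℝ))

/-- The canonical symmetric bilinear form on `V = B → ℝ` (coordinates in the basis of
simple roots `Δ = {α_i}`). -/
def bform [Fintype B] (M : CoxeterMatrix B) (u v : B → ℝ) : ℝ :=
  ∑ i, ∑ j, u i * v j * cB M i j

/-- The natural pairing `⟨-,-⟩ : V* × V → ℝ`, where both `V` and `V*` are modelled as
`B → ℝ` (coordinates of `V*` taken in the dual basis of `Δ`). -/
def pair [Fintype B] (f v : B → ℝ) : ℝ := ∑ i, f i * v i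

/-- The simple root `α_i ∈ V`. -/
def sroot [DecidableEq B] (i : B) : B → ℝ := Pi.single i 1

/-- `ρ` is the geometric representation of `W` on `V = B → ℝ`:
`s_i · v = v - 2 B(α_i, v) α_i`. -/
def IsGeomRep [Fintype B] [DecidableEq B] (M : CoxeterMatrix B) (cs : CoxeterSystem M W)
    (ρ : W →* (B → ℝ) ≃ₗ[ℝ] (B → ℝ)) : Prop :=
  ∀ (i : B) (v : B → ℝ), ρ (cs.simple i) v = v - (2 * bform M (sroot i) v) • sroot i

/-- `π` is the contragredient representation of `W` on `V* = B → ℝ`: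
`⟨w·f, w·v⟩ = ⟨f, v⟩`. -/
def IsContraRep [Fintype B] (ρ : W →* (B → ℝ) ≃ₗ[ℝ] (B → ℝ))
    (π : W →* (B → ℝ) ≃ₗ[ℝ] (B → ℝ)) : Prop :=
  ∀ (w : W) (f v : B → ℝ), pair (π w f) (ρ w v) = pair f v

/-- The set `Φ⁺` of positive roots: roots (elements of the orbit of the simple roots)
all of whose coordinates in the basis `Δ` are nonnegative. -/
def PhiPos [Fintype B] [DecidableEq B] (ρ : W →* (B → ℝ) ≃ₗ[ℝ] (B → ℝ)) : Set (B → ℝ) :=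
  {α | (∃ (w : W) (i : B), α = ρ w (sroot i)) ∧ ∀ j, 0 ≤ α j}

/-- The hyperplane `H_α = {f ∈ V* : ⟨f, α⟩ = 0}`. -/
def hyp [Fintype B] (α : B → ℝ) : Set (B → ℝ) := {f | pair f α = 0}

/-- The set `𝔓 = {H_α : α ∈ Φ⁺}` of hyperplanes. -/
def Planes [Fintype B] [DecidableEq B] (ρ : W →* (B → ℝ) ≃ₗ[ℝ] (B → ℝ)) :
    Set (Set (B → ℝ)) :=
  {H | ∃ α ∈ PhiPos (W := W) ρ, H = hyp α}

/-- The (open) dominant chamber `C = {f ∈ V* : ⟨f, α_i⟩ > 0 for all i}`. -/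
def domCham (B : Type) [Fintype B] [DecidableEq B] : Set (B → ℝ) :=
  {f | ∀ i : B, 0 < pair f (sroot i)}

/-- The Tits cone `U = ⋃_{w ∈ W} w · (closure of C)`. -/
def titsCone [Fintype B] [DecidableEq B] (π : W →* (B → ℝ) ≃ₗ[ℝ] (B → ℝ)) :
    Set (B → ℝ) :=
  ⋃ w : W, (π w) '' closure (domCham B)

/-- `A ⩀ B := A ∩ B ∩ U°`, where `U°` is the interior of the Tits cone. -/
def dcap [Fintype B] [DecidableEq B] (π : W →* (B → ℝ) ≃ₗ[ℝ] (B → ℝ))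
    (A A' : Set (B → ℝ)) : Set (B → ℝ) :=
  A ∩ A' ∩ interior (titsCone π)

/-- A set `𝔔` of hyperplanes is intersecting if `H₁ ⩀ H₂ ≠ ∅` for all `H₁, H₂ ∈ 𝔔`. -/
def Intersecting [Fintype B] [DecidableEq B] (π : W →* (B → ℝ) ≃ₗ[ℝ] (B → ℝ))
    (Q : Set (Set (B → ℝ))) : Prop :=
  ∀ H₁ ∈ Q, ∀ H₂ ∈ Q, (dcap π H₁ H₂).Nonempty

/-- The chamber `wC ⊆ V*`. -/
def cham [Fintype B] [DecidableEq B] (π : W →* (B → ℝ) ≃ₗ[ℝ] (B → ℝ)) (w : W) :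
    Set (B → ℝ) :=
  (π w) '' domCham B

/-- The hyperplane with root `α` separates `f, g ∈ V*`: `⟨f, α⟩⟨g, α⟩ < 0`. -/
def SepPt [Fintype B] (α f g : B → ℝ) : Prop := pair f α * pair g α < 0

/-- The hyperplane with root `α` separates the subsets `A, A'` of `V*`: every point of
`A ∪ A'` lies off the hyperplane, and every point of `A` is separated from every point
of `A'`. -/
def SepSets [Fintype B] (α : B → ℝ) (A A' : Set (B → ℝ)) : Prop :=
  (∀ f ∈ A ∪ A', pair f α ≠ 0) ∧ ∀ f ∈ A, ∀ g ∈ A', SepPt α f g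

/-- The subset `A ⊆ V*` lies entirely on one side of the hyperplane with root `α`. -/
def OneSide [Fintype B] (α : B → ℝ) (A : Set (B → ℝ)) : Prop :=
  (∀ f ∈ A, pair f α ≠ 0) ∧ ∀ f ∈ A, ∀ g ∈ A, ¬ SepPt α f g

/-- The hyperplane `H ∈ 𝔓` separates the subsets `A, A'` of `V*` (expressed via a
positive root `α` with `H = H_α`; this does not depend on the choice of `α`). -/
def SepSetsH [Fintype B] [DecidableEq B] (ρ : W →* (B → ℝ) ≃ₗ[ℝ] (B → ℝ))
    (H : Set (B → ℝ)) (A A' : Set (B → ℝ)) : Prop :=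
  ∃ α ∈ PhiPos (W := W) ρ, H = hyp α ∧ SepSets α A A'

/-- The open half-space bounded by the hyperplane with root `α` on the side not containing
the chamber `wC`. -/
def halfNeg [Fintype B] [DecidableEq B] (π : W →* (B → ℝ) ≃ₗ[ℝ] (B → ℝ)) (w : W)
    (α : B → ℝ) : Set (B → ℝ) :=
  {f | ∀ f₀ ∈ cham π w, pair f α * pair f₀ α < 0}

/-- Auxiliary recursion producing the sets `𝔄_i` (first component) together with the
cumulative unions `𝔄₀ ∪ ⋯ ∪ 𝔄_i` (second component), starting from `𝔄₀ = A0`: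
`𝔄_{i+1} = {P ∈ Q ∖ (𝔄₀ ∪ ⋯ ∪ 𝔄_i) : P ⩀ σ(R) = ∅ for some R ∈ 𝔄_i}`. -/
def AseqAux [Fintype B] [DecidableEq B] (π : W →* (B → ℝ) ≃ₗ[ℝ] (B → ℝ))
    (Q : Set (Set (B → ℝ))) (σ : W) (A0 : Set (Set (B → ℝ))) :
    ℕ → Set (Set (B → ℝ)) × Set (Set (B → ℝ))
  | 0 => (A0, A0)
  | i + 1 =>
    let prev := AseqAux π Q σ A0 i
    ({P | P ∈ Q ∧ P ∉ prev.2 ∧ ∃ R ∈ prev.1, dcap π P ((π σ) '' R) = ∅},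
      prev.2 ∪ {P | P ∈ Q ∧ P ∉ prev.2 ∧ ∃ R ∈ prev.1, dcap π P ((π σ) '' R) = ∅})

/-- The set `𝔄_i`. -/
def Aseq [Fintype B] [DecidableEq B] (π : W →* (B → ℝ) ≃ₗ[ℝ] (B → ℝ))
    (Q : Set (Set (B → ℝ))) (σ : W) (A0 : Set (Set (B → ℝ))) (i : ℕ) :
    Set (Set (B → ℝ)) :=
  (AseqAux π Q σ A0 i).1

section Words

variable {M : CoxeterMatrix B}

/-- The element `x′_n = x s₁ ⋯ ŝ_{i₁} ⋯ ŝ_{i_{n−1}} ⋯ s_{i_n − 1}`: the product of `x` and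
the first `i_n - 1` letters of the word `ω`, with the letters at positions `i₁, …, i_{n−1}`
omitted. (Positions are recorded `0`-based: the index `ι n : Fin ω.length` corresponds to
the letter `s_{i_{n+1}}` of the paper.) -/
def omitProd (cs : CoxeterSystem M W) (x : W) (ω : List B) {p : ℕ}
    (ι : Fin p → Fin ω.length) (n : Fin p) : W :=
  x * cs.wordProd (((List.finRange ω.length).filter
      (fun j : Fin ω.length => decide ((j : ℕ) < (ι n : ℕ) ∧ ∀ m : Fin p, m < n → j ≠ ι m))).map ω.get)

/-- The condition `ℓ(x′_n s_{i_n}) < ℓ(x′_n)` for all `n = 1, …, p`. -/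
def DescCond (cs : CoxeterSystem M W) (x : W) (ω : List B) {p : ℕ}
    (ι : Fin p → Fin ω.length) : Prop :=
  ∀ n : Fin p, cs.length (omitProd cs x ω ι n * cs.simple (ω.get (ι n))) <
    cs.length (omitProd cs x ω ι n)

/-- The element `x_n := x s₁ ⋯ s_{i_n − 1}`. -/
def xseq (cs : CoxeterSystem M W) (x : W) (ω : List B) {p : ℕ}
    (ι : Fin p → Fin ω.length) (n : Fin p) : W :=
  x * cs.wordProd (ω.take (ι n))

/-- The reflection `σ_n := x_n s_{i_n} x_n⁻¹`. -/
def sigmaseq (cs : CoxeterSystem M W) (x : W) (ω : List B) {p : ℕ}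
    (ι : Fin p → Fin ω.length) (n : Fin p) : W :=
  xseq cs x ω ι n * cs.simple (ω.get (ι n)) * (xseq cs x ω ι n)⁻¹

/-- The element `e_n := σ_n σ_{n−1} ⋯ σ₁`, with `e₀ = e`. -/
def eseq (cs : CoxeterSystem M W) (x : W) (ω : List B) {p : ℕ}
    (ι : Fin p → Fin ω.length) : ℕ → W
  | 0 => 1
  | n + 1 => (if h : n < p then sigmaseq cs x ω ι ⟨n, h⟩ else 1) * eseq cs x ω ι n

/-- A root of the hyperplane `H_n` corresponding to the reflection `σ_n`, namely
`x_n · α_{s_{i_n}}`. -/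
def rootseq [Fintype B] [DecidableEq B] (cs : CoxeterSystem M W)
    (ρ : W →* (B → ℝ) ≃ₗ[ℝ] (B → ℝ)) (x : W) (ω : List B) {p : ℕ}
    (ι : Fin p → Fin ω.length) (n : Fin p) : B → ℝ :=
  ρ (xseq cs x ω ι n) (sroot (ω.get (ι n)))

/-- The hyperplane `H_n ∈ 𝔓` corresponding to the reflection `σ_n`. -/
def Hseq [Fintype B] [DecidableEq B] (cs : CoxeterSystem M W)
    (ρ : W →* (B → ℝ) ≃ₗ[ℝ] (B → ℝ)) (x : W) (ω : List B) {p : ℕ}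
    (ι : Fin p → Fin ω.length) (n : Fin p) : Set (B → ℝ) :=
  hyp (rootseq cs ρ x ω ι n)

end Words

/-!
The Tits cone `U` is convex: `f ∈ U` iff only finitely many positive roots are negative on `f`, and
finiteness of this set survives convex combinations. The criterion rests on the fact that every
root is nonnegative or nonpositive, which reduces to rank two, where the coefficients of
`w · α_s` are the values `sin (n π / m) / sin (π / m)`.

With `U°` convex, pick `x ∈ [f₁, f₂] ∩ P′` and `y ∈ [g₁, g₂] ∩ P′`. Neither segment crosses `P`, so
`x` is on the side of `f₁` and `y` on the side of `g₁`; hence `P` separates `x` from `y`, and the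
segment `[x, y] ⊆ P′ ∩ U°` meets `P`.
-/

section Basic

variable {M : CoxeterMatrix B}

lemma cB_self (i : B) : cB M i i = 1 := by
  simp [cB]

lemma cB_comm (i j : B) : cB M i j = cB M j i := by
  rw [cB, cB, M.symmetric]

lemma sroot_nonneg [DecidableEq B] (i : B) : 0 ≤ sroot i :=
  Pi.single_nonneg.mpr zero_le_one

lemma rep_mul_apply (ρ : W →* (B → ℝ) ≃ₗ[ℝ] (B → ℝ)) (w w' : W) (v : B → ℝ) :
    ρ (w * w') v = ρ w (ρ w' v) := by
  rw [map_mul]; rfl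

lemma rep_one_apply (ρ : W →* (B → ℝ) ≃ₗ[ℝ] (B → ℝ)) (v : B → ℝ) : ρ 1 v = v := by
  rw [map_one]; rfl

lemma rep_simple_rep_simple {cs : CoxeterSystem M W} {ρ : W →* (B → ℝ) ≃ₗ[ℝ] (B → ℝ)}
    (i : B) (v : B → ℝ) :
    ρ (cs.simple i) (ρ (cs.simple i) v) = v := by
  rw [← rep_mul_apply, cs.simple_mul_simple_self, rep_one_apply]

end Basic

section Form

open Matrix

variable [Fintype B] {M : CoxeterMatrix B}

lemma pair_eq_dotProduct (f v : B → ℝ) : pair f v = f ⬝ᵥ v := rfl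

lemma pair_smul_add_smul (a b : ℝ) (f g v : B → ℝ) :
    pair (a • f + b • g) v = a * pair f v + b * pair g v := by
  simp [pair_eq_dotProduct]

lemma pair_neg_right (f v : B → ℝ) : pair f (-v) = -pair f v := by
  simp [pair_eq_dotProduct]

@[simp] lemma pair_sroot [DecidableEq B] (f : B → ℝ) (i : B) : pair f (sroot i) = f i := by
  simp [pair_eq_dotProduct, sroot]

lemma pair_nonneg {f v : B → ℝ} (hf : 0 ≤ f) (hv : 0 ≤ v) : 0 ≤ pair f v :=
  Finset.sum_nonneg fun i _ => mul_nonneg (hf i) (hv i)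

lemma isLinearMap_pair_left (v : B → ℝ) : IsLinearMap ℝ fun f => pair f v :=
  ⟨fun f g => by simp [pair_eq_dotProduct], fun c f => by simp [pair_eq_dotProduct]⟩

lemma bform_eq_dotProduct (u v : B → ℝ) : bform M u v = u ⬝ᵥ (of (cB M) *ᵥ v) := by
  simp only [bform, dotProduct, mulVec, of_apply, Finset.mul_sum]
  exact Finset.sum_congr rfl fun i _ => Finset.sum_congr rfl fun j _ => by ring

lemma bform_comm (u v : B → ℝ) : bform M u v = bform M v u := by
  rw [bform, bform, Finset.sum_comm]
  refine Finset.sum_congr rfl fun i _ => Finset.sum_congr rfl fun j _ => ?_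
  rw [cB_comm]
  ring

lemma bform_sub_right (u v w : B → ℝ) : bform M u (v - w) = bform M u v - bform M u w := by
  simp [bform_eq_dotProduct, mulVec_sub]

lemma bform_smul_right (c : ℝ) (u v : B → ℝ) : bform M u (c • v) = c * bform M u v := by
  simp [bform_eq_dotProduct, mulVec_smul]

lemma bform_sub_left (u v w : B → ℝ) : bform M (u - v) w = bform M u w - bform M v w := by
  rw [bform_comm, bform_sub_right, bform_comm w, bform_comm w]

lemma bform_smul_left (c : ℝ) (u v : B → ℝ) : bform M (c • u) v = c * bform M u v := by
  rw [bform_comm, bform_smul_right, bform_comm]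

lemma bform_sroot_sroot [DecidableEq B] (i j : B) : bform M (sroot i) (sroot j) = cB M i j := by
  simp [bform_eq_dotProduct, sroot]

lemma IsContraRep.pair_apply {ρ π : W →* (B → ℝ) ≃ₗ[ℝ] (B → ℝ)}
    (hπ : IsContraRep ρ π) (w : W) (f v : B → ℝ) :
    pair (π w f) v = pair f (ρ w⁻¹ v) := by
  rw [← hπ w f (ρ w⁻¹ v), ← rep_mul_apply, mul_inv_cancel, rep_one_apply]

end Form

section Representation

variable [Fintype B] [DecidableEq B] {M : CoxeterMatrix B} {cs : CoxeterSystem M W}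
  {ρ : W →* (B → ℝ) ≃ₗ[ℝ] (B → ℝ)}

lemma IsGeomRep.simple_sroot (hρ : IsGeomRep M cs ρ) (i j : B) :
    ρ (cs.simple i) (sroot j) = sroot j - (2 * cB M i j) • sroot i := by
  rw [hρ, bform_sroot_sroot]

lemma IsGeomRep.simple_sroot_self (hρ : IsGeomRep M cs ρ) (i : B) :
    ρ (cs.simple i) (sroot i) = -sroot i := by
  rw [hρ.simple_sroot, cB_self]; module

lemma IsGeomRep.simple_apply_of_ne (hρ : IsGeomRep M cs ρ) {i j : B} (h : j ≠ i)
    (v : B → ℝ) : ρ (cs.simple i) v j = v j := by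
  simp [hρ i v, sroot, h]

lemma IsGeomRep.bform_simple (hρ : IsGeomRep M cs ρ) (i : B) (u v : B → ℝ) :
    bform M (ρ (cs.simple i) u) (ρ (cs.simple i) v) = bform M u v := by
  simp only [hρ i, bform_sub_left, bform_sub_right, bform_smul_left, bform_smul_right,
    bform_sroot_sroot, cB_self, bform_comm u (sroot i)]
  ring

lemma IsGeomRep.bform_apply (hρ : IsGeomRep M cs ρ) (w : W) (u v : B → ℝ) :
    bform M (ρ w u) (ρ w v) = bform M u v := by
  induction w using cs.simple_induction_left generalizing u v with
  | one => rw [rep_one_apply, rep_one_apply]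
  | mul_simple_left w i ih => rw [rep_mul_apply, rep_mul_apply, hρ.bform_simple, ih]

end Representation

section Dihedral

open Polynomial.Chebyshev

variable {M : CoxeterMatrix B}

-- The argument is `-2 B(α_x, α_y) = 2 cos (π / m)`, and `S_{n-1} (2 cos θ) = sin (n θ) / sin θ`;
-- for `m = ∞` it is `2`, and `S_{n-1} 2 = n`.
def dihedralCoeff (M : CoxeterMatrix B) (x y : B) (n : ℕ) : ℝ :=
  (S ℝ ((n : ℤ) - 1)).eval (-(2 * cB M x y))

lemma dihedralCoeff_zero (x y : B) : dihedralCoeff M x y 0 = 0 := by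
  simp [dihedralCoeff]

lemma dihedralCoeff_one (x y : B) : dihedralCoeff M x y 1 = 1 := by
  simp [dihedralCoeff]

lemma dihedralCoeff_add_two (x y : B) (n : ℕ) :
    dihedralCoeff M x y (n + 2) =
      -(2 * cB M x y) * dihedralCoeff M x y (n + 1) - dihedralCoeff M x y n := by
  have h := S_add_two ℝ ((n : ℤ) - 1)
  rw [show (n : ℤ) - 1 + 2 = ((n + 2 : ℕ) : ℤ) - 1 by push_cast; ring,
    show (n : ℤ) - 1 + 1 = ((n + 1 : ℕ) : ℤ) - 1 by push_cast; ring] at h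
  rw [dihedralCoeff, dihedralCoeff, dihedralCoeff, h]
  simp

lemma dihedralCoeff_nonneg {x y : B} (hxy : x ≠ y) {n : ℕ} (hn : M x y = 0 ∨ n ≤ M x y) :
    0 ≤ dihedralCoeff M x y n := by
  by_cases h0 : M x y = 0
  · simp [dihedralCoeff, cB, h0, S_eval_two]
  have hm : (2 : ℝ) ≤ M x y := by
    have := M.off_diagonal x y hxy
    exact_mod_cast (show 2 ≤ M x y by omega)
  set θ := Real.pi / M x y
  have hθ : 0 < θ := by positivity
  have hsin : 0 < Real.sin θ :=
    Real.sin_pos_of_pos_of_lt_pi hθ (div_lt_self Real.pi_pos (by linarith))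
  have hnθ : n * θ ≤ Real.pi := by
    have : (n : ℝ) ≤ M x y := by exact_mod_cast hn.resolve_left h0
    calc n * θ ≤ M x y * θ := by gcongr
      _ = Real.pi := mul_div_cancel₀ _ (by positivity)
  have key := S_two_mul_real_cos θ ((n : ℤ) - 1)
  rw [show (((n : ℤ) - 1 : ℤ) : ℝ) + 1 = n by push_cast; ring] at key
  have : -(2 * cB M x y) = 2 * Real.cos θ := by simp [cB, h0, θ]
  rw [dihedralCoeff, this]
  exact nonneg_of_mul_nonneg_left
    (key ▸ Real.sin_nonneg_of_nonneg_of_le_pi (by positivity) hnθ) hsin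

end Dihedral

section TwoLetterWords

open CoxeterSystem

variable {M : CoxeterMatrix B} {cs : CoxeterSystem M W}

lemma exists_simple_mul_wordProd_alternatingWord {p q l : B} (hl : l = p ∨ l = q) (k : ℕ) :
    ∃ k' ≤ k + 1,
      cs.simple l * cs.wordProd (alternatingWord p q k) = cs.wordProd (alternatingWord p q k') ∨
      cs.simple l * cs.wordProd (alternatingWord p q k) = cs.wordProd (alternatingWord q p k') := by
  by_cases hc : l = if Even k then q else p
  · exact ⟨k + 1, le_rfl, Or.inl (by rw [alternatingWord_succ', cs.wordProd_cons, hc])⟩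
  cases k with
  | zero =>
    have hlp : l = p := by simp_all
    exact ⟨1, by omega, Or.inr (by simp [alternatingWord, hlp])⟩
  | succ k =>
    have hl' : l = if Even k then q else p := by
      by_cases hk : Even k <;> simp_all [Nat.even_add_one]
    refine ⟨k, by omega, Or.inl ?_⟩
    rw [alternatingWord_succ', cs.wordProd_cons, ← hl', cs.simple_mul_simple_cancel_left]

lemma exists_wordProd_eq_alternatingWord {x y : B} {ω : List B}
    (hω : ∀ l ∈ ω, l = x ∨ l = y) :
    ∃ k ≤ ω.length, cs.wordProd ω = cs.wordProd (alternatingWord x y k) ∨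
      cs.wordProd ω = cs.wordProd (alternatingWord y x k) := by
  induction ω with
  | nil => exact ⟨0, le_rfl, Or.inl rfl⟩
  | cons l ω ih =>
    obtain ⟨k, hk, h | h⟩ := ih fun a ha => hω a (List.mem_cons_of_mem l ha)
    · obtain ⟨k', hk', hc⟩ := exists_simple_mul_wordProd_alternatingWord (cs := cs)
        (hω l List.mem_cons_self) k
      exact ⟨k', by simp; omega, by rwa [cs.wordProd_cons, h]⟩
    · obtain ⟨k', hk', hc⟩ := exists_simple_mul_wordProd_alternatingWord (cs := cs)
        (hω l List.mem_cons_self).symm k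
      exact ⟨k', by simp; omega, by rw [cs.wordProd_cons, h]; exact hc.symm⟩

lemma length_wordProd_alternatingWord_succ_mul_simple_le (x y : B) (k : ℕ) :
    cs.length (cs.wordProd (alternatingWord y x (k + 1)) * cs.simple x) ≤ k := by
  rw [alternatingWord_succ, cs.wordProd_concat, cs.simple_mul_simple_cancel_right]
  simpa using cs.length_wordProd_le (alternatingWord x y k)

lemma wordProd_eq_alternatingWord_of_isReduced {x y : B} {ω : List B}
    (hω : ∀ l ∈ ω, l = x ∨ l = y) (hred : cs.IsReduced ω)
    (hx : ¬ cs.IsRightDescent (cs.wordProd ω) x) :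
    cs.wordProd ω = cs.wordProd (alternatingWord x y ω.length) ∧
      (M x y = 0 ∨ ω.length < M x y) := by
  rw [cs.not_isRightDescent_iff, hred.eq] at hx
  have hne : ∀ k, ω.length = k + 1 →
      cs.wordProd ω ≠ cs.wordProd (alternatingWord y x (k + 1)) := by
    intro k hk h
    have := length_wordProd_alternatingWord_succ_mul_simple_le (cs := cs) x y k
    rw [← h, hx] at this
    omega
  have hlen : ∀ z z' k, cs.wordProd ω = cs.wordProd (alternatingWord z z' k) → k ≤ ω.length →
      k = ω.length := by
    intro z z' k h hk
    have := cs.length_wordProd_le (alternatingWord z z' k)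
    rw [← h, hred.eq, length_alternatingWord] at this
    omega
  have hω' : cs.wordProd ω = cs.wordProd (alternatingWord x y ω.length) := by
    obtain ⟨k, hk, h | h⟩ := exists_wordProd_eq_alternatingWord (cs := cs) hω
    · rwa [← hlen x y k h hk]
    · obtain _ | k := k
      · rwa [← hlen y x 0 h hk]
      · exact absurd h (hne k (hlen y x _ h hk).symm)
  refine ⟨hω', ?_⟩
  by_contra hM
  simp only [not_or, not_lt] at hM
  have hred' : cs.IsReduced (alternatingWord x y ω.length) := by
    rw [CoxeterSystem.IsReduced, ← hω', hred.eq, length_alternatingWord]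
  have hMω : M x y = ω.length := by
    by_contra h'
    exact cs.not_isReduced_alternatingWord x y hM.1 (by omega) hred'
  -- For `ω.length = m` the braid relation turns `ω` into an alternating word ending in `x`.
  obtain ⟨k, hk⟩ : ∃ k, M x y = k + 1 := Nat.exists_eq_add_one_of_ne_zero hM.1
  refine hne k (hMω ▸ hk) ?_
  have hbraid := cs.wordProd_braidWord_eq x y
  rw [braidWord, braidWord, M.symmetric y x] at hbraid
  rw [hω', ← hMω, hbraid, hk]

lemma exists_eq_mul_wordProd_not_isRightDescent (i j : B) (w : W) :
    ∃ u ω, (∀ l ∈ ω, l = i ∨ l = j) ∧ w = u * cs.wordProd ω ∧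
      cs.length w = cs.length u + ω.length ∧
      ¬ cs.IsRightDescent u i ∧ ¬ cs.IsRightDescent u j := by
  by_cases h : ∃ l, (l = i ∨ l = j) ∧ cs.IsRightDescent w l
  · obtain ⟨l, hl, hdesc⟩ := h
    obtain ⟨u, ω, hω, hw, hlen, hui, huj⟩ :=
      exists_eq_mul_wordProd_not_isRightDescent i j (w * cs.simple l)
    refine ⟨u, ω ++ [l], ?_, ?_, ?_, hui, huj⟩
    · simpa [or_imp, forall_and] using ⟨hω, hl⟩
    · rw [cs.wordProd_append, cs.wordProd_singleton, ← mul_assoc, ← hw,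
        cs.simple_mul_simple_cancel_right]
    · rw [cs.isRightDescent_iff] at hdesc
      simp only [List.length_append, List.length_singleton]
      omega
  · simp only [not_exists, not_and] at h
    exact ⟨w, [], by simp, by simp, by simp, h i (Or.inl rfl), h j (Or.inr rfl)⟩
termination_by cs.length w
decreasing_by exact hdesc

end TwoLetterWords

section RankTwo

open CoxeterSystem

variable [Fintype B] [DecidableEq B] {M : CoxeterMatrix B} {cs : CoxeterSystem M W}
  {ρ : W →* (B → ℝ) ≃ₗ[ℝ] (B → ℝ)}

lemma IsGeomRep.wordProd_alternatingWord_sroot (hρ : IsGeomRep M cs ρ) (x y : B) (n : ℕ) :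
    ρ (cs.wordProd (alternatingWord x y n)) (sroot x) =
      if Even n then dihedralCoeff M x y (n + 1) • sroot x + dihedralCoeff M x y n • sroot y
      else dihedralCoeff M x y n • sroot x + dihedralCoeff M x y (n + 1) • sroot y := by
  induction n with
  | zero => simp [alternatingWord, dihedralCoeff_zero, dihedralCoeff_one]
  | succ n ih =>
    rw [alternatingWord_succ', cs.wordProd_cons, rep_mul_apply, ih, dihedralCoeff_add_two]
    by_cases hn : Even n
    · simp only [hn, if_true, Nat.even_add_one, not_true, if_false, map_add, map_smul,
        hρ.simple_sroot, cB_self, cB_comm y x]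
      module
    · simp only [hn, if_false, Nat.even_add_one, not_false_eq_true, if_true, map_add, map_smul,
        hρ.simple_sroot, cB_self]
      module

lemma IsGeomRep.exists_wordProd_sroot_eq_nonneg_combination (hρ : IsGeomRep M cs ρ)
    {x y : B} (hxy : x ≠ y) {ω : List B} (hω : ∀ l ∈ ω, l = x ∨ l = y) (hred : cs.IsReduced ω)
    (hx : ¬ cs.IsRightDescent (cs.wordProd ω) x) :
    ∃ a b : ℝ, 0 ≤ a ∧ 0 ≤ b ∧ ρ (cs.wordProd ω) (sroot x) = a • sroot x + b • sroot y := by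
  obtain ⟨hω', hM⟩ := wordProd_eq_alternatingWord_of_isReduced hω hred hx
  have h₀ := dihedralCoeff_nonneg (M := M) (n := ω.length) hxy (by omega)
  have h₁ := dihedralCoeff_nonneg (M := M) (n := ω.length + 1) hxy (by omega)
  rw [hω', hρ.wordProd_alternatingWord_sroot]
  split_ifs
  exacts [⟨_, _, h₁, h₀, rfl⟩, ⟨_, _, h₀, h₁, rfl⟩]

theorem IsGeomRep.apply_sroot_nonneg (hρ : IsGeomRep M cs ρ) {w : W} {i : B}
    (hi : ¬ cs.IsRightDescent w i) : 0 ≤ ρ w (sroot i) := by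
  by_cases hw : w = 1
  · rw [hw, rep_one_apply]
    exact sroot_nonneg i
  obtain ⟨j, hj⟩ := cs.exists_rightDescent_of_ne_one hw
  have hij : i ≠ j := fun h => hi (h ▸ hj)
  -- Humphreys' reduction to rank two: `w = u · π ω` with `ω` a word in `s_i, s_j` and `ℓ` additive.
  obtain ⟨u, ω, hω, hw, hlen, hui, huj⟩ := exists_eq_mul_wordProd_not_isRightDescent i j w
  have hred : cs.IsReduced ω := by
    have := cs.length_mul_le u (cs.wordProd ω)
    rw [← hw] at this
    exact le_antisymm (cs.length_wordProd_le ω) (by omega)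
  have hωi : ¬ cs.IsRightDescent (cs.wordProd ω) i := by
    have := cs.length_mul_le u (cs.wordProd ω * cs.simple i)
    rw [← mul_assoc, ← hw, cs.not_isRightDescent_iff.mp hi] at this
    unfold CoxeterSystem.IsRightDescent
    have := hred.eq
    omega
  have hu : cs.length u < cs.length w := by
    have hω₀ : ω ≠ [] := by
      rintro rfl
      rw [cs.wordProd_nil, mul_one] at hw
      exact huj (hw ▸ hj)
    have := List.length_pos_iff.mpr hω₀
    omega
  obtain ⟨a, b, ha, hb, hab⟩ := hρ.exists_wordProd_sroot_eq_nonneg_combination hij hω hred hωi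
  rw [hw, rep_mul_apply, hab, map_add, map_smul, map_smul]
  exact add_nonneg (smul_nonneg ha (hρ.apply_sroot_nonneg hui))
    (smul_nonneg hb (hρ.apply_sroot_nonneg huj))
termination_by cs.length w

end RankTwo

section PositiveRoots

variable [Fintype B] [DecidableEq B] {M : CoxeterMatrix B} {cs : CoxeterSystem M W}
  {ρ : W →* (B → ℝ) ≃ₗ[ℝ] (B → ℝ)}

lemma IsGeomRep.apply_sroot_nonneg_or_nonpos (hρ : IsGeomRep M cs ρ) (w : W) (i : B) :
    0 ≤ ρ w (sroot i) ∨ ρ w (sroot i) ≤ 0 := by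
  by_cases hi : cs.IsRightDescent w i
  · right
    have h := hρ.apply_sroot_nonneg (cs.isRightDescent_iff_not_isRightDescent_mul.mp hi)
    rwa [rep_mul_apply, hρ.simple_sroot_self, map_neg, neg_nonneg] at h
  · exact Or.inl (hρ.apply_sroot_nonneg hi)

lemma sroot_mem_phiPos (i : B) : sroot i ∈ PhiPos (W := W) ρ :=
  ⟨⟨1, i, (rep_one_apply ρ _).symm⟩, sroot_nonneg i⟩

lemma IsGeomRep.bform_self_of_mem_phiPos (hρ : IsGeomRep M cs ρ) {α : B → ℝ}
    (hα : α ∈ PhiPos ρ) : bform M α α = 1 := by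
  obtain ⟨⟨w, i, rfl⟩, -⟩ := hα
  rw [hρ.bform_apply, bform_sroot_sroot, cB_self]

lemma IsGeomRep.eq_sroot_of_mem_phiPos (hρ : IsGeomRep M cs ρ) {α : B → ℝ}
    (hα : α ∈ PhiPos ρ) {i : B} (hsupp : ∀ j, j ≠ i → α j = 0) : α = sroot i := by
  have hα_eq : α = α i • sroot i := by
    ext j
    by_cases hj : j = i
    · simp [hj, sroot]
    · simp [hsupp j hj, sroot, hj]
  have hform := hρ.bform_self_of_mem_phiPos hα
  rw [hα_eq, bform_smul_left, bform_smul_right, bform_sroot_sroot, cB_self] at hform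
  have : α i = 1 := by nlinarith [hα.2 i]
  rw [hα_eq, this, one_smul]

lemma IsGeomRep.simple_apply_mem_phiPos (hρ : IsGeomRep M cs ρ) {i : B} {α : B → ℝ}
    (hα : α ∈ PhiPos ρ) (hne : α ≠ sroot i) : ρ (cs.simple i) α ∈ PhiPos ρ := by
  obtain ⟨⟨w, k, rfl⟩, hpos⟩ := hα
  refine ⟨⟨cs.simple i * w, k, (rep_mul_apply ρ _ _ _).symm⟩, ?_⟩
  rcases hρ.apply_sroot_nonneg_or_nonpos (cs.simple i * w) k with h | h
  · rw [rep_mul_apply] at h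
    exact h
  · refine absurd (hρ.eq_sroot_of_mem_phiPos ⟨⟨w, k, rfl⟩, hpos⟩ fun j hj => ?_) hne
    have := h j
    rw [rep_mul_apply, hρ.simple_apply_of_ne hj] at this
    exact le_antisymm this (hpos j)

lemma IsGeomRep.simple_apply_ne_sroot (hρ : IsGeomRep M cs ρ) (i : B) {α : B → ℝ}
    (hα : 0 ≤ α) : ρ (cs.simple i) α ≠ sroot i := by
  intro h
  have := hα i
  rw [← rep_simple_rep_simple (cs := cs) (ρ := ρ) i α, h, hρ.simple_sroot_self] at this
  norm_num [sroot] at this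

lemma IsGeomRep.finite_phiPos_not_nonneg_apply (hρ : IsGeomRep M cs ρ) (w : W) :
    {α | α ∈ PhiPos ρ ∧ ¬ 0 ≤ ρ w α}.Finite := by
  induction w using cs.simple_induction_right with
  | one =>
    exact Set.finite_empty.subset fun α ⟨hα, hneg⟩ => hneg (by rw [rep_one_apply]; exact hα.2)
  | mul_simple_right w i ih =>
    refine ((ih.image (ρ (cs.simple i))).insert (sroot i)).subset ?_
    rintro α ⟨hα, hneg⟩
    by_cases hαi : α = sroot i
    · exact Or.inl hαi
    refine Or.inr ⟨ρ (cs.simple i) α, ⟨hρ.simple_apply_mem_phiPos hα hαi, ?_⟩,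
      rep_simple_rep_simple i α⟩
    rwa [rep_mul_apply] at hneg

end PositiveRoots

section TitsCone

variable [Fintype B] [DecidableEq B] {M : CoxeterMatrix B} {cs : CoxeterSystem M W}
  {ρ π : W →* (B → ℝ) ≃ₗ[ℝ] (B → ℝ)}

def negativeRoots (ρ : W →* (B → ℝ) ≃ₗ[ℝ] (B → ℝ)) (f : B → ℝ) : Set (B → ℝ) :=
  {α | α ∈ PhiPos ρ ∧ pair f α < 0}

lemma closure_domCham : closure (domCham B) = Set.Ici 0 := by
  have : domCham B = Set.univ.pi fun _ => Set.Ioi 0 := by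
    ext f
    simp [domCham]
  rw [this, closure_pi_set]
  ext f
  simp [Pi.le_def]

lemma mem_titsCone_iff {f : B → ℝ} : f ∈ titsCone π ↔ ∃ w g, 0 ≤ g ∧ π w g = f := by
  simp [titsCone, closure_domCham]

lemma IsGeomRep.finite_negativeRoots_of_mem_titsCone (hρ : IsGeomRep M cs ρ)
    (hπ : IsContraRep ρ π) {f : B → ℝ} (hf : f ∈ titsCone π) : (negativeRoots ρ f).Finite := by
  obtain ⟨w, g, hg, rfl⟩ := mem_titsCone_iff.mp hf
  refine (hρ.finite_phiPos_not_nonneg_apply w⁻¹).subset fun α ⟨hα, hneg⟩ => ⟨hα, fun hpos => ?_⟩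
  rw [hπ.pair_apply] at hneg
  exact (pair_nonneg hg hpos).not_gt hneg

lemma IsGeomRep.negativeRoots_rep_simple_subset (hρ : IsGeomRep M cs ρ)
    (hπ : IsContraRep ρ π) {f : B → ℝ} {i : B} (hi : f i < 0) :
    negativeRoots ρ (π (cs.simple i) f) ⊆ ρ (cs.simple i) '' (negativeRoots ρ f \ {sroot i}) := by
  rintro α ⟨hα, hneg⟩
  rw [hπ.pair_apply, cs.inv_simple] at hneg
  have hαi : α ≠ sroot i := by
    rintro rfl
    rw [hρ.simple_sroot_self, pair_neg_right, pair_sroot] at hneg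
    linarith
  exact ⟨ρ (cs.simple i) α, ⟨⟨hρ.simple_apply_mem_phiPos hα hαi, hneg⟩,
    hρ.simple_apply_ne_sroot i hα.2⟩, rep_simple_rep_simple i α⟩

lemma IsGeomRep.mem_titsCone_of_finite_negativeRoots (hρ : IsGeomRep M cs ρ)
    (hπ : IsContraRep ρ π) {f : B → ℝ} (hf : (negativeRoots ρ f).Finite) : f ∈ titsCone π := by
  obtain ⟨n, hn⟩ : ∃ n, (negativeRoots ρ f).ncard = n := ⟨_, rfl⟩
  induction n using Nat.strong_induction_on generalizing f with
  | _ n ih =>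
    by_cases hpos : 0 ≤ f
    · exact mem_titsCone_iff.mpr ⟨1, f, hpos, rep_one_apply π f⟩
    obtain ⟨i, hi⟩ : ∃ i, f i < 0 := by simpa [Pi.le_def] using hpos
    have hsub := hρ.negativeRoots_rep_simple_subset hπ hi
    have hfin : (negativeRoots ρ f \ {sroot i}).Finite := hf.sdiff
    have hlt : (negativeRoots ρ (π (cs.simple i) f)).ncard < n := calc
      _ ≤ (ρ (cs.simple i) '' (negativeRoots ρ f \ {sroot i})).ncard :=
          Set.ncard_le_ncard hsub (hfin.image _)
      _ ≤ (negativeRoots ρ f \ {sroot i}).ncard := Set.ncard_image_le hfin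
      _ < n := hn ▸ Set.ncard_sdiff_singleton_lt_of_mem ⟨sroot_mem_phiPos i, by simpa⟩ hf
    obtain ⟨w, g, hg, hwg⟩ := mem_titsCone_iff.mp (ih _ hlt ((hfin.image _).subset hsub) rfl)
    exact mem_titsCone_iff.mpr
      ⟨cs.simple i * w, g, hg, by rw [rep_mul_apply, hwg, rep_simple_rep_simple]⟩

lemma IsGeomRep.mem_titsCone_iff_finite_negativeRoots (hρ : IsGeomRep M cs ρ)
    (hπ : IsContraRep ρ π) {f : B → ℝ} : f ∈ titsCone π ↔ (negativeRoots ρ f).Finite :=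
  ⟨hρ.finite_negativeRoots_of_mem_titsCone hπ, hρ.mem_titsCone_of_finite_negativeRoots hπ⟩

theorem IsGeomRep.convex_titsCone (hρ : IsGeomRep M cs ρ) (hπ : IsContraRep ρ π) :
    Convex ℝ (titsCone π) := by
  intro f hf g hg a b ha hb _
  rw [hρ.mem_titsCone_iff_finite_negativeRoots hπ] at *
  refine (hf.union hg).subset fun α ⟨hα, hneg⟩ => ?_
  rw [pair_smul_add_smul] at hneg
  by_contra h
  simp only [Set.mem_union, negativeRoots, Set.mem_ofPred_eq, hα, true_and, not_or, not_lt] at h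
  nlinarith [mul_nonneg ha h.1, mul_nonneg hb h.2]

end TitsCone

section Separation

variable [Fintype B] {α f g : B → ℝ}

lemma SepPt.pair_left_ne_zero (h : SepPt α f g) : pair f α ≠ 0 :=
  left_ne_zero_of_mul h.ne

lemma SepPt.pair_right_ne_zero (h : SepPt α f g) : pair g α ≠ 0 :=
  right_ne_zero_of_mul h.ne

lemma pair_mul_pos_of_not_sepPt (h : ¬ SepPt α f g) (hf : pair f α ≠ 0) (hg : pair g α ≠ 0) :
    0 < pair g α * pair f α :=
  lt_of_le_of_ne (by rw [mul_comm]; exact not_lt.mp h) (mul_ne_zero hg hf).symm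

lemma convex_hyp (α : B → ℝ) : Convex ℝ (hyp α) :=
  convex_hyperplane (isLinearMap_pair_left α) 0

lemma pair_mul_pos_of_mem_segment {x : B → ℝ} {c : ℝ} (hf : 0 < pair f α * c)
    (hg : 0 < pair g α * c) (hx : x ∈ segment ℝ f g) : 0 < pair x α * c := by
  obtain ⟨a, b, ha, hb, hab, rfl⟩ := hx
  rw [pair_smul_add_smul, add_mul, mul_assoc, mul_assoc]
  rcases ha.eq_or_lt with rfl | ha'
  · rw [zero_add] at hab
    simpa [hab] using hg
  · exact add_pos_of_pos_of_nonneg (mul_pos ha' hf) (mul_nonneg hb hg.le)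

lemma exists_mem_segment_pair_eq_zero (h : SepPt α f g) :
    ∃ x ∈ segment ℝ f g, pair x α = 0 := by
  unfold SepPt at h
  set p := pair f α
  set q := pair g α
  obtain ⟨hqp, hq, hp⟩ : q - p ≠ 0 ∧ 0 ≤ q / (q - p) ∧ 0 ≤ -p / (q - p) := by
    rcases mul_neg_iff.mp h with ⟨hp, hq⟩ | ⟨hp, hq⟩
    · exact ⟨by linarith, div_nonneg_of_nonpos hq.le (by linarith),
        div_nonneg_of_nonpos (by linarith) (by linarith)⟩
    · exact ⟨by linarith, div_nonneg hq.le (by linarith), div_nonneg (by linarith) (by linarith)⟩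
  refine ⟨(q / (q - p)) • f + (-p / (q - p)) • g, ⟨_, _, hq, hp, by field_simp; ring, rfl⟩, ?_⟩
  rw [pair_smul_add_smul]
  field_simp
  ring

end Separation

theorem statement9_general [Fintype B] [DecidableEq B] {M : CoxeterMatrix B}
    (cs : CoxeterSystem M W) (ρ π : W →* (B → ℝ) ≃ₗ[ℝ] (B → ℝ))
    (hρ : IsGeomRep M cs ρ) (hπ : IsContraRep ρ π)
    (α β : B → ℝ)
    (f₁ f₂ g₁ g₂ : B → ℝ)
    (hf₁ : f₁ ∈ interior (titsCone π)) (hf₂ : f₂ ∈ interior (titsCone π))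
    (hg₁ : g₁ ∈ interior (titsCone π)) (hg₂ : g₂ ∈ interior (titsCone π))
    (h1 : SepPt β f₁ f₂) (h1' : ¬ SepPt α f₁ f₂)
    (h2 : SepPt β g₁ g₂) (h2' : ¬ SepPt α g₁ g₂)
    (h3 : SepPt α f₁ g₁ ∧ SepPt α f₁ g₂ ∧ SepPt α f₂ g₁ ∧ SepPt α f₂ g₂) :
    (dcap π (hyp α) (hyp β)).Nonempty := by
  obtain ⟨hf₁g₁, hf₁g₂, hf₂g₁, -⟩ := h3
  have hU : Convex ℝ (interior (titsCone π)) := (hρ.convex_titsCone hπ).interior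
  obtain ⟨x, hx, hxβ⟩ := exists_mem_segment_pair_eq_zero h1
  obtain ⟨y, hy, hyβ⟩ := exists_mem_segment_pair_eq_zero h2
  have hxα : 0 < pair x α * pair f₁ α :=
    pair_mul_pos_of_mem_segment (mul_self_pos.mpr hf₁g₁.pair_left_ne_zero)
      (pair_mul_pos_of_not_sepPt h1' hf₁g₁.pair_left_ne_zero hf₂g₁.pair_left_ne_zero) hx
  have hyα : 0 < pair y α * pair g₁ α :=
    pair_mul_pos_of_mem_segment (mul_self_pos.mpr hf₁g₁.pair_right_ne_zero)
      (pair_mul_pos_of_not_sepPt h2' hf₁g₁.pair_right_ne_zero hf₁g₂.pair_right_ne_zero) hy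
  have hxy : SepPt α x y := by
    unfold SepPt at hf₁g₁ ⊢
    nlinarith [mul_pos hxα hyα]
  obtain ⟨z, hz, hzα⟩ := exists_mem_segment_pair_eq_zero hxy
  exact ⟨z, ⟨hzα, (convex_hyp β).segment_subset hxβ hyβ hz⟩,
    hU.segment_subset (hU.segment_subset hf₁ hf₂ hx) (hU.segment_subset hg₁ hg₂ hy) hz⟩

/-- if `P′` separates `f₁, f₂` and separates `g₁, g₂` while `P` separates
neither pair, and `P` separates each `f_i` from each `g_j` (all points in `U°`, off
`P ∪ P′`), then `P ⩀ P′ ≠ ∅`. Here `P = H_α` and `P′ = H_β` with `α, β ∈ Φ⁺`. -/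
theorem statement9 [Fintype B] [DecidableEq B] {M : CoxeterMatrix B}
    (cs : CoxeterSystem M W) (ρ π : W →* (B → ℝ) ≃ₗ[ℝ] (B → ℝ))
    (hρ : IsGeomRep M cs ρ) (hπ : IsContraRep ρ π)
    (α β : B → ℝ) (hα : α ∈ PhiPos ρ) (hβ : β ∈ PhiPos ρ)
    (f₁ f₂ g₁ g₂ : B → ℝ)
    (hf₁ : f₁ ∈ interior (titsCone π)) (hf₂ : f₂ ∈ interior (titsCone π))
    (hg₁ : g₁ ∈ interior (titsCone π)) (hg₂ : g₂ ∈ interior (titsCone π))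
    (hf₁' : f₁ ∉ hyp α ∪ hyp β) (hf₂' : f₂ ∉ hyp α ∪ hyp β)
    (hg₁' : g₁ ∉ hyp α ∪ hyp β) (hg₂' : g₂ ∉ hyp α ∪ hyp β)
    (h1 : SepPt β f₁ f₂) (h1' : ¬ SepPt α f₁ f₂)
    (h2 : SepPt β g₁ g₂) (h2' : ¬ SepPt α g₁ g₂)
    (h3 : SepPt α f₁ g₁ ∧ SepPt α f₁ g₂ ∧ SepPt α f₂ g₁ ∧ SepPt α f₂ g₂) :
    (dcap π (hyp α) (hyp β)).Nonempty :=
  statement9_general cs ρ π hρ hπ α β f₁ f₂ g₁ g₂ hf₁ hf₂ hg₁ hg₂ h1 h1' h2 h2' h3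

end PaperBound
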